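/- The thermodynamic energy per unit area of the almost-bosonic anyon gas satisfies the scaling law e(β,ρ) = β ρ² e(1,1) for all β ≥ 0 and ρ ≥ 0. -/

import Mathlib

noncomputable section

open MeasureTheory Filter Topology Pointwise Set Metric

abbrev E2 := EuclideanSpace ℝ (Fin 2)

/-- `x^⊥ = (-x₂, x₁)`. -/
def perp (z : E2) : E2 := WithLp.toLp 2 (fun i : Fin 2 => if i = 0 then -(z 1) else z 0)

/-- `∇^⊥ w₀ (z) = z^⊥ / |z|²` where `w₀(z) = log |z|`. -/
def gradPerpW0 (z : E2) : E2 := (‖z‖ ^ 2)⁻¹ • perp z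

/-- The self-consistent vector potential `A[ϱ](x) = ∫ ∇^⊥w₀(x−y) ϱ(y) dy`. -/
def vecA (ϱ : E2 → ℝ) (x : E2) : E2 := ∫ y, ϱ y • gradPerpW0 (x - y)

/-- the `j`-th component of the covariant gradient `(∇ + iβA[ϱ])u` at `x`. -/
def covGrad (β : ℝ) (ϱ : E2 → ℝ) (u : E2 → ℂ) (x : E2) (j : Fin 2) : ℂ :=
  fderiv ℝ u x (EuclideanSpace.single j 1) + (((β * vecA ϱ x j : ℝ)) : ℂ) * Complex.I * u x

/-- Magnetic kinetic energy `∫_Ω |(-i∇ + βA[ϱ])u|²` with a prescribed density `ϱ`. -/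
def magKinetic (Ω : Set E2) (β : ℝ) (ϱ : E2 → ℝ) (u : E2 → ℂ) : ℝ :=
  ∫ x in Ω, ∑ j : Fin 2, ‖covGrad β ϱ u x j‖ ^ 2

/-- `|u|²` extended by zero outside `Ω`. -/
def density (Ω : Set E2) (u : E2 → ℂ) : E2 → ℝ := Ω.indicator fun y => ‖u y‖ ^ 2

/-- The average-field functional `ℰ^{af}_{Ω,β}[u] = ∫_Ω |(-i∇+βA[|u|²1_Ω])u|²`. -/
def afEnergy (Ω : Set E2) (β : ℝ) (u : E2 → ℂ) : ℝ := magKinetic Ω β (density Ω u) u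

/-- Membership in `H¹(Ω)`. -/
def MemH1 (Ω : Set E2) (u : E2 → ℂ) : Prop :=
  AEStronglyMeasurable u (volume.restrict Ω) ∧
  Integrable (fun x => ‖u x‖ ^ 2) (volume.restrict Ω) ∧
  (∀ᵐ x ∂(volume.restrict Ω), DifferentiableAt ℝ u x) ∧
  Integrable (fun x => ‖fderiv ℝ u x‖ ^ 2) (volume.restrict Ω)

/-- Membership in `H¹₀(Ω)`: an `H¹` function on all of `ℝ²` vanishing outside `Ω`. -/
def MemH10 (Ω : Set E2) (u : E2 → ℂ) : Prop :=
  MemH1 univ u ∧ ∀ x ∉ Ω, u x = 0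

/-- mass `∫_Ω |u|²`. -/
def mass (Ω : Set E2) (u : E2 → ℂ) : ℝ := ∫ x in Ω, ‖u x‖ ^ 2

/-- Dirichlet ground-state energy `E₀(Ω,β,M)`. -/
def dirichletE (Ω : Set E2) (β M : ℝ) : ℝ :=
  sInf {e | ∃ u, MemH10 Ω u ∧ mass Ω u = M ∧ e = afEnergy Ω β u}

/-- Neumann ground-state energy `E(Ω,β,M)`. -/
def neumannE (Ω : Set E2) (β M : ℝ) : ℝ :=
  sInf {e | ∃ u, MemH1 Ω u ∧ mass Ω u = M ∧ e = afEnergy Ω β u}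

/-- The open unit square `Q ⊂ ℝ²`. -/
def unitSquare : Set E2 := {x | x 0 ∈ Ioo (0:ℝ) 1 ∧ x 1 ∈ Ioo (0:ℝ) 1}

/-- `Ω` has Lipschitz boundary: near each boundary point, up to a rigid (linear isometric)
change of coordinates, `Ω` is the subgraph of a Lipschitz function. -/
def HasLipschitzBoundary (Ω : Set E2) : Prop :=
  ∀ x ∈ frontier Ω, ∃ ε : ℝ, 0 < ε ∧ ∃ (g : E2 ≃ₗᵢ[ℝ] E2) (f : ℝ → ℝ) (K : NNReal),
    LipschitzWith K f ∧
    Ω ∩ ball x ε = {y ∈ ball x ε | (g (y - x)) 1 < f ((g (y - x)) 0)}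

/-!
The functional has an exact two-parameter symmetry. Since `∇^⊥w₀` is homogeneous of degree `-1`,
`A[ϱ(·/l)] = l A[ϱ](·/l)`, so the dilation `u_{c,l} = c u(·/l)` satisfies
`ℰ^{af}_{lΩ,β}[u_{c,l}] = c² ℰ^{af}_{Ω,βc²l²}[u]` and has mass `c²l²` times that of `u`; hence
`E₀(lΩ, β, c²l²M) = c² E₀(Ω, βc²l², M)`. For `β, ρ > 0` the choice `l = (βρ)^{-1/2}`, `c² = ρ`
gives `E₀(LQ,β,ρL²)/L² = βρ² E₀(L'Q,1,L'²)/L'²` with `L' = √(βρ) L → ∞`. For `β = 0` the choice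
`c = 1`, `l = L` shows that `E₀(LQ,0,ρL²)` does not depend on `L`, so its ratio to `L²` tends to `0`.
-/

theorem perp_smul (a : ℝ) (z : E2) : perp (a • z) = a • perp z := by
  ext i
  simp only [perp, PiLp.smul_apply, smul_eq_mul, PiLp.toLp_apply]
  split <;> ring

theorem gradPerpW0_smul (a : ℝ) (z : E2) : gradPerpW0 (a • z) = a⁻¹ • gradPerpW0 z := by
  rcases eq_or_ne a 0 with rfl | ha
  · simp [gradPerpW0, perp]
  · rw [gradPerpW0, gradPerpW0, perp_smul, norm_smul, smul_smul, smul_smul, Real.norm_eq_abs,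
      mul_pow, sq_abs, mul_inv, mul_right_comm, sq, mul_inv, inv_mul_cancel_right₀ ha]

theorem setIntegral_smul_set_comp_inv_smul {E F : Type*} [NormedAddCommGroup E]
    [NormedSpace ℝ E] [MeasurableSpace E] [BorelSpace E] [FiniteDimensional ℝ E]
    [NormedAddCommGroup F] [NormedSpace ℝ F] (μ : Measure E) [μ.IsAddHaarMeasure]
    (f : E → F) (s : Set E) {l : ℝ} (hl : 0 < l) :
    ∫ x in l • s, f (l⁻¹ • x) ∂μ = l ^ Module.finrank ℝ E • ∫ x in s, f x ∂μ := by
  rw [Measure.setIntegral_comp_smul_of_pos μ f _ (inv_pos.2 hl), inv_smul_smul₀ hl.ne', inv_pow,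
    inv_inv]

theorem vecA_comp_inv_smul {l : ℝ} (hl : 0 < l) (k : ℝ) (ϱ : E2 → ℝ) (x : E2) :
    vecA (fun y => k * ϱ (l⁻¹ • y)) x = (k * l) • vecA ϱ (l⁻¹ • x) := by
  have hsub : ∀ z : E2, x - l • z = l • (l⁻¹ • x - z) := fun z => by
    rw [smul_sub, smul_inv_smul₀ hl.ne']
  calc vecA (fun y => k * ϱ (l⁻¹ • y)) x
      = ∫ y, (fun z => (k * ϱ z) • gradPerpW0 (x - l • z)) (l⁻¹ • y) := by
        simp only [vecA, smul_inv_smul₀ hl.ne']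
    _ = l ^ 2 • ∫ z, (k * l⁻¹) • (ϱ z • gradPerpW0 (l⁻¹ • x - z)) := by
        rw [Measure.integral_comp_inv_smul_of_nonneg volume
          (fun z => (k * ϱ z) • gradPerpW0 (x - l • z)) hl.le, finrank_euclideanSpace_fin]
        simp only [hsub, gradPerpW0_smul, smul_smul, mul_right_comm k]
    _ = (k * l) • vecA ϱ (l⁻¹ • x) := by
        rw [integral_smul, smul_smul, vecA]
        congr 1
        field_simp

def dilate {E F : Type*} [SMul ℝ E] [SMul ℝ F] (c l : ℝ) (u : E → F) (y : E) : F :=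
  c • u (l⁻¹ • y)

section Dilate

variable {E F : Type*} [NormedAddCommGroup E] [NormedSpace ℝ E] [NormedAddCommGroup F]
  [NormedSpace ℝ F]

theorem dilate_dilate_inv {c l : ℝ} (hc : c ≠ 0) (hl : l ≠ 0) (v : E → F) :
    dilate c l (dilate c⁻¹ l⁻¹ v) = v := by
  ext y
  simp [dilate, inv_inv, smul_inv_smul₀ hl, smul_inv_smul₀ hc]

theorem norm_dilate (c l : ℝ) (u : E → F) (y : E) :
    ‖dilate c l u y‖ = |c| * ‖u (l⁻¹ • y)‖ := by
  rw [dilate, norm_smul, Real.norm_eq_abs]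

theorem fderiv_dilate (c l : ℝ) (u : E → F) (x : E) :
    fderiv ℝ (dilate c l u) x = (c * l⁻¹) • fderiv ℝ u (l⁻¹ • x) := by
  change fderiv ℝ (c • fun y => u (l⁻¹ • y)) x = _
  rw [fderiv_const_smul_field, Pi.smul_apply, fderiv_comp_smul, smul_smul]

theorem DifferentiableAt.dilate {u : E → F} {x : E} (c : ℝ) {l : ℝ}
    (hu : DifferentiableAt ℝ u (l⁻¹ • x)) : DifferentiableAt ℝ (dilate c l u) x :=
  (hu.comp x (differentiableAt_id.const_smul l⁻¹)).const_smul c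

end Dilate

theorem density_dilate {l : ℝ} (hl : l ≠ 0) (c : ℝ) (Ω : Set E2) (u : E2 → ℂ) :
    density (l • Ω) (dilate c l u) = fun y => c ^ 2 * density Ω u (l⁻¹ • y) := by
  ext y
  by_cases hy : l⁻¹ • y ∈ Ω
  · have hy' : y ∈ l • Ω := (mem_smul_set_iff_inv_smul_mem₀ hl Ω y).2 hy
    simp only [density, indicator_of_mem hy', indicator_of_mem hy, norm_dilate, mul_pow, sq_abs]
  · have hy' : y ∉ l • Ω := fun h => hy ((mem_smul_set_iff_inv_smul_mem₀ hl Ω y).1 h)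
    simp only [density, indicator_of_notMem hy', indicator_of_notMem hy, mul_zero]

theorem covGrad_dilate {l : ℝ} (hl : 0 < l) (c β : ℝ) (Ω : Set E2) (u : E2 → ℂ) (x : E2)
    (j : Fin 2) :
    covGrad β (density (l • Ω) (dilate c l u)) (dilate c l u) x j
      = ((c * l⁻¹ : ℝ) : ℂ) * covGrad (β * c ^ 2 * l ^ 2) (density Ω u) u (l⁻¹ • x) j := by
  rw [covGrad, covGrad, density_dilate hl.ne', vecA_comp_inv_smul hl, fderiv_dilate]
  simp only [dilate, FunLike.coe_smul, Pi.smul_apply, PiLp.smul_apply, smul_eq_mul,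
    Complex.real_smul, Complex.ofReal_mul, Complex.ofReal_inv, Complex.ofReal_pow]
  field_simp

theorem afEnergy_dilate {l : ℝ} (hl : 0 < l) (c β : ℝ) (Ω : Set E2) (u : E2 → ℂ) :
    afEnergy (l • Ω) β (dilate c l u) = c ^ 2 * afEnergy Ω (β * c ^ 2 * l ^ 2) u := by
  simp only [afEnergy, magKinetic, covGrad_dilate hl, norm_mul, Complex.norm_real,
    Real.norm_eq_abs, mul_pow, sq_abs, ← Finset.mul_sum]
  rw [setIntegral_smul_set_comp_inv_smul volume
      (fun y => c ^ 2 * l⁻¹ ^ 2 * ∑ j, ‖covGrad (β * c ^ 2 * l ^ 2) (density Ω u) u y j‖ ^ 2) Ω hl,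
    integral_const_mul, finrank_euclideanSpace_fin, smul_eq_mul]
  field_simp

theorem mass_dilate {l : ℝ} (hl : 0 < l) (c : ℝ) (Ω : Set E2) (u : E2 → ℂ) :
    mass (l • Ω) (dilate c l u) = c ^ 2 * l ^ 2 * mass Ω u := by
  simp only [mass, norm_dilate, mul_pow, sq_abs]
  rw [setIntegral_smul_set_comp_inv_smul volume (fun y => c ^ 2 * ‖u y‖ ^ 2) Ω hl,
    integral_const_mul, finrank_euclideanSpace_fin, smul_eq_mul]
  ring

theorem MemH10.dilate {Ω : Set E2} {u : E2 → ℂ} (hu : MemH10 Ω u) (c : ℝ) {l : ℝ} (hl : l ≠ 0) :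
    MemH10 (l • Ω) (dilate c l u) := by
  obtain ⟨⟨hmeas, hsq, hdiff, hgrad⟩, hzero⟩ := hu
  simp only [Measure.restrict_univ] at hmeas hsq hdiff hgrad
  have hqmp : Measure.QuasiMeasurePreserving (fun x : E2 => l⁻¹ • x) volume volume :=
    Measure.quasiMeasurePreserving_smul volume (inv_ne_zero hl)
  refine ⟨⟨?_, ?_, ?_, ?_⟩, fun x hx => ?_⟩
  · rw [Measure.restrict_univ]
    exact (hmeas.comp_quasiMeasurePreserving hqmp).const_smul c
  · simp only [Measure.restrict_univ, norm_dilate, mul_pow, sq_abs]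
    exact (hsq.comp_smul (inv_ne_zero hl)).const_mul _
  · rw [Measure.restrict_univ]
    filter_upwards [hqmp.ae hdiff] with x hx using hx.dilate c
  · simp only [Measure.restrict_univ, fderiv_dilate, norm_smul, mul_pow]
    exact (hgrad.comp_smul (inv_ne_zero hl)).const_mul _
  · show c • u (l⁻¹ • x) = 0
    rw [hzero _ fun h => hx ((mem_smul_set_iff_inv_smul_mem₀ hl Ω x).2 h), smul_zero]

theorem dirichletE_smul_set {c l : ℝ} (hc : c ≠ 0) (hl : 0 < l) (Ω : Set E2) (β M : ℝ) :
    dirichletE (l • Ω) β (c ^ 2 * l ^ 2 * M) = c ^ 2 * dirichletE Ω (β * c ^ 2 * l ^ 2) M := by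
  refine (congrArg sInf ?_).trans (Real.sInf_smul_of_nonneg (sq_nonneg c) _)
  ext e
  constructor
  · rintro ⟨v, hv, hmass, rfl⟩
    have hv_eq : dilate c l (dilate c⁻¹ l⁻¹ v) = v := dilate_dilate_inv hc hl.ne' v
    refine ⟨afEnergy Ω (β * c ^ 2 * l ^ 2) (dilate c⁻¹ l⁻¹ v), ⟨_, ?_, ?_, rfl⟩, ?_⟩
    · simpa only [inv_inv, inv_smul_smul₀ hl.ne'] using hv.dilate c⁻¹ (inv_ne_zero hl.ne')
    · rw [← hv_eq, mass_dilate hl] at hmass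
      exact mul_left_cancel₀ (by positivity) hmass
    · show c ^ 2 * _ = _
      rw [← afEnergy_dilate hl, hv_eq]
  · rintro ⟨_, ⟨u, hu, rfl, rfl⟩, rfl⟩
    exact ⟨dilate c l u, hu.dilate c hl.ne', mass_dilate hl c Ω u,
      (afEnergy_dilate hl c β Ω u).symm⟩

theorem afEnergy_nonneg (Ω : Set E2) (β : ℝ) (u : E2 → ℂ) : 0 ≤ afEnergy Ω β u :=
  integral_nonneg fun _ => Finset.sum_nonneg fun _ _ => sq_nonneg _

theorem memH10_zero (Ω : Set E2) : MemH10 Ω 0 :=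
  ⟨⟨aestronglyMeasurable_const, by simp, .of_forall fun _ => differentiableAt_const _, by simp⟩,
    fun _ _ => rfl⟩

theorem dirichletE_zero_mass (Ω : Set E2) (β : ℝ) : dirichletE Ω β 0 = 0 := by
  have hlower : 0 ∈ lowerBounds {e | ∃ u, MemH10 Ω u ∧ mass Ω u = 0 ∧ e = afEnergy Ω β u} := by
    rintro _ ⟨u, -, -, rfl⟩
    exact afEnergy_nonneg Ω β u
  have hzero : afEnergy Ω β 0 = 0 := by simp [afEnergy, magKinetic, covGrad]
  exact le_antisymm (csInf_le ⟨0, hlower⟩ ⟨0, memH10_zero Ω, by simp [mass], hzero.symm⟩)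
    (Real.sInf_nonneg hlower)

theorem tendsto_dirichletE_div_sq_of_coupling_zero (Ω : Set E2) (ρ : ℝ) :
    Tendsto (fun L : ℝ => dirichletE (L • Ω) 0 (ρ * L ^ 2) / L ^ 2) atTop (𝓝 0) := by
  refine ((tendsto_const_nhds (x := dirichletE Ω 0 ρ)).div_atTop
    (tendsto_pow_atTop two_ne_zero)).congr' ?_
  filter_upwards [eventually_gt_atTop 0] with L hL
  have hscale := dirichletE_smul_set one_ne_zero hL Ω 0 ρ
  rw [one_pow, one_mul, one_mul, zero_mul, zero_mul, mul_comm] at hscale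
  rw [hscale]

theorem tendsto_dirichletE_div_sq_of_pos {Ω : Set E2} {e₁ β ρ : ℝ} (hβ : 0 < β) (hρ : 0 < ρ)
    (h₁ : Tendsto (fun L : ℝ => dirichletE (L • Ω) 1 (L ^ 2) / L ^ 2) atTop (𝓝 e₁)) :
    Tendsto (fun L : ℝ => dirichletE (L • Ω) β (ρ * L ^ 2) / L ^ 2) atTop
      (𝓝 (β * ρ ^ 2 * e₁)) := by
  set a := √(β * ρ)
  have ha : 0 < a := by positivity
  have ha_sq : a ^ 2 = β * ρ := Real.sq_sqrt (by positivity)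
  have hc_sq : √ρ ^ 2 = ρ := Real.sq_sqrt hρ.le
  have hscale : ∀ L, 0 < L → dirichletE (L • Ω) β (ρ * L ^ 2) / L ^ 2
      = β * ρ ^ 2 * (dirichletE ((a * L) • Ω) 1 ((a * L) ^ 2) / (a * L) ^ 2) := by
    intro L hL
    have h := dirichletE_smul_set (Real.sqrt_ne_zero'.2 hρ) (inv_pos.2 ha) ((a * L) • Ω) β
      ((a * L) ^ 2)
    rw [smul_smul, inv_mul_cancel_left₀ ha.ne', hc_sq, inv_pow, ha_sq, mul_pow, ha_sq] at h
    rw [show ρ * (β * ρ)⁻¹ * (β * ρ * L ^ 2) = ρ * L ^ 2 by field_simp,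
      show β * ρ * (β * ρ)⁻¹ = 1 by field_simp] at h
    rw [h, mul_pow, ha_sq]
    field_simp
  refine ((h₁.comp (tendsto_id.const_mul_atTop ha)).const_mul (β * ρ ^ 2)).congr' ?_
  filter_upwards [eventually_gt_atTop 0] with L hL
  exact (hscale L hL).symm

/-- **Scaling law for the thermodynamic energy per unit area.**
If `e(β,ρ)` denotes the thermodynamic limit `lim_{L→∞} E₀(LQ,β,ρL²)/L²` (with `Q` the unit
square), then `e(β,ρ) = β ρ² e(1,1)` for all `β ≥ 0`, `ρ ≥ 0`. -/
theorem thermo_energy_scaling (e : ℝ → ℝ → ℝ)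
    (he : ∀ β ρ : ℝ, 0 ≤ β → 0 ≤ ρ →
      Tendsto (fun L : ℝ => dirichletE (L • unitSquare) β (ρ * L ^ 2) / L ^ 2)
        atTop (𝓝 (e β ρ)))
    (β ρ : ℝ) (hβ : 0 ≤ β) (hρ : 0 ≤ ρ) :
    e β ρ = β * ρ ^ 2 * e 1 1 := by
  have hlim := he β ρ hβ hρ
  rcases hβ.eq_or_lt with rfl | hβ
  · rw [zero_mul, zero_mul]
    exact tendsto_nhds_unique hlim (tendsto_dirichletE_div_sq_of_coupling_zero unitSquare ρ)
  rcases hρ.eq_or_lt with rfl | hρ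
  · simp only [zero_mul, dirichletE_zero_mass, zero_div] at hlim
    rw [zero_pow two_ne_zero, mul_zero, zero_mul]
    exact tendsto_nhds_unique hlim tendsto_const_nhds
  have h₁ := he 1 1 zero_le_one zero_le_one
  simp only [one_mul] at h₁
  exact tendsto_nhds_unique hlim (tendsto_dirichletE_div_sq_of_pos hβ hρ h₁)
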